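/- arXiv:1203.5688 — 2 statements merged into one kernel-verified Lean document; each statement's English description precedes it below -/
import Mathlib

section
/- Let (Λ, μ) be a probability space and let f, g, h : Λ → ℝ be measurable functions taking only the values −1 and 1. Then |∫ f·g dμ − ∫ f·h dμ| ≤ 1 − ∫ g·h dμ. -/
open MeasureTheory

/- Pointwise, for `a, b, c ∈ {±1}` one has `|ab - ac| = |b - c| = 1 - bc`; integrating this
against the probability measure `μ` gives the inequality. -/

lemma abs_le_one_of_eq_neg_one_or_eq_one {a : ℝ} (ha : a = -1 ∨ a = 1) : |a| ≤ 1 := by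
  rcases ha with rfl | rfl <;> norm_num

lemma abs_sub_eq_one_sub_mul_of_sign {b c : ℝ} (hb : b = -1 ∨ b = 1) (hc : c = -1 ∨ c = 1) :
    |b - c| = 1 - b * c := by
  rcases hb with rfl | rfl <;> rcases hc with rfl | rfl <;> norm_num

lemma abs_mul_sub_mul_le_one_sub_mul {a b c : ℝ} (ha : |a| ≤ 1) (hb : b = -1 ∨ b = 1)
    (hc : c = -1 ∨ c = 1) : |a * b - a * c| ≤ 1 - b * c := by
  calc |a * b - a * c| = |a| * |b - c| := by rw [← mul_sub, abs_mul]
    _ ≤ |b - c| := mul_le_of_le_one_left (abs_nonneg _) ha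
    _ = 1 - b * c := abs_sub_eq_one_sub_mul_of_sign hb hc

lemma integrable_mul_of_abs_le_one {Λ : Type*} [MeasurableSpace Λ] {μ : Measure Λ}
    [IsFiniteMeasure μ] {u v : Λ → ℝ} (hmu : Measurable u) (hmv : Measurable v)
    (hu : ∀ x, |u x| ≤ 1) (hv : ∀ x, |v x| ≤ 1) : Integrable (fun x => u x * v x) μ :=
  Integrable.of_bound (hmu.mul hmv).aestronglyMeasurable 1 <| .of_forall fun x => by
    rw [Real.norm_eq_abs, abs_mul]
    exact mul_le_one₀ (hu x) (abs_nonneg _) (hv x)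

lemma abs_integral_sub_le_one_sub_integral {Λ : Type*} [MeasurableSpace Λ] {μ : Measure Λ}
    [IsProbabilityMeasure μ] {F G H : Λ → ℝ} (hF : Integrable F μ) (hG : Integrable G μ)
    (hH : Integrable H μ) (hle : ∀ x, |F x - G x| ≤ 1 - H x) :
    |(∫ x, F x ∂μ) - ∫ x, G x ∂μ| ≤ 1 - ∫ x, H x ∂μ :=
  calc |(∫ x, F x ∂μ) - ∫ x, G x ∂μ| = |∫ x, (F x - G x) ∂μ| := by rw [integral_sub hF hG]
    _ ≤ ∫ x, |F x - G x| ∂μ := abs_integral_le_integral_abs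
    _ ≤ ∫ x, (1 - H x) ∂μ := integral_mono (hF.sub hG).abs ((integrable_const 1).sub hH) hle
    _ = 1 - ∫ x, H x ∂μ := by simp [integral_sub (integrable_const 1) hH]

/-- Bell's original inequality for three dichotomic (±1-valued) observables
admitting a local hidden-variables representation. -/
theorem bell_original {Λ : Type*} [MeasurableSpace Λ] (μ : Measure Λ)
    [IsProbabilityMeasure μ] (f g h : Λ → ℝ)
    (hmf : Measurable f) (hmg : Measurable g) (hmh : Measurable h)
    (hf : ∀ x, f x = -1 ∨ f x = 1)
    (hg : ∀ x, g x = -1 ∨ g x = 1)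
    (hh : ∀ x, h x = -1 ∨ h x = 1) :
    |(∫ x, f x * g x ∂μ) - ∫ x, f x * h x ∂μ| ≤ 1 - ∫ x, g x * h x ∂μ := by
  have hf1 x := abs_le_one_of_eq_neg_one_or_eq_one (hf x)
  have hg1 x := abs_le_one_of_eq_neg_one_or_eq_one (hg x)
  have hh1 x := abs_le_one_of_eq_neg_one_or_eq_one (hh x)
  exact abs_integral_sub_le_one_sub_integral
    (integrable_mul_of_abs_le_one hmf hmg hf1 hg1) (integrable_mul_of_abs_le_one hmf hmh hf1 hh1)
    (integrable_mul_of_abs_le_one hmg hmh hg1 hh1)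
    fun x => abs_mul_sub_mul_le_one_sub_mul (hf1 x) (hg x) (hh x)
end

section
/- Let E₁₁, E₁₂, E₂₁, E₂₂ be real numbers with |E₁₁ + E₁₂ + E₂₁ − E₂₂| > 2. Then there do not exist a probability space (Λ, μ) and measurable functions a₁, a₂, b₁, b₂ : Λ → ℝ with |aᵢ(λ)| ≤ 1 and |bⱼ(λ)| ≤ 1 for all λ, such that ∫ aᵢ·bⱼ dμ = Eᵢⱼ for all i, j ∈ {1,2}. -/
open MeasureTheory

/-!
For a fixed hidden state the CHSH combination is `p (r + s) + q (r - s)` with all four outcomes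
in `[-1, 1]`, so its absolute value is at most `|r + s| + |r - s| = 2 max |r| |s| ≤ 2`.
Integrating this pointwise bound against the probability measure of hidden states bounds the
same combination of the correlations by `2`.
-/

lemma abs_add_add_abs_sub_le_two {r s : ℝ} (hr : |r| ≤ 1) (hs : |s| ≤ 1) :
    |r + s| + |r - s| ≤ 2 := by
  rw [abs_le] at hr hs
  rcases abs_cases (r + s) with ⟨h₁, -⟩ | ⟨h₁, -⟩ <;>
    rcases abs_cases (r - s) with ⟨h₂, -⟩ | ⟨h₂, -⟩ <;> linarith

lemma abs_chsh_le_two {p q r s : ℝ} (hp : |p| ≤ 1) (hq : |q| ≤ 1) (hr : |r| ≤ 1)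
    (hs : |s| ≤ 1) : |p * r + p * s + q * r - q * s| ≤ 2 :=
  calc |p * r + p * s + q * r - q * s| = |p * (r + s) + q * (r - s)| := by ring_nf
    _ ≤ |p| * |r + s| + |q| * |r - s| := by
      simpa only [abs_mul] using abs_add_le (p * (r + s)) (q * (r - s))
    _ ≤ |r + s| + |r - s| := by
      gcongr <;> [exact mul_le_of_le_one_left (abs_nonneg _) hp;
        exact mul_le_of_le_one_left (abs_nonneg _) hq]
    _ ≤ 2 := abs_add_add_abs_sub_le_two hr hs

section

variable {Ω : Type*} [MeasurableSpace Ω] {μ : Measure Ω}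

lemma integrable_mul_of_abs_le_one_s5 [IsFiniteMeasure μ] {f g : Ω → ℝ}
    (hf : AEStronglyMeasurable f μ) (hg : AEStronglyMeasurable g μ)
    (hf₁ : ∀ᵐ x ∂μ, |f x| ≤ 1) (hg₁ : ∀ᵐ x ∂μ, |g x| ≤ 1) :
    Integrable (fun x ↦ f x * g x) μ :=
  Integrable.of_bound (hf.mul hg) 1 <| by
    filter_upwards [hf₁, hg₁] with x hfx hgx
    rw [Real.norm_eq_abs, abs_mul]
    exact mul_le_one₀ hfx (abs_nonneg _) hgx

variable [IsProbabilityMeasure μ] {a₁ a₂ b₁ b₂ : Ω → ℝ}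

theorem abs_chsh_integral_le_two
    (ha₁ : AEStronglyMeasurable a₁ μ) (ha₂ : AEStronglyMeasurable a₂ μ)
    (hb₁ : AEStronglyMeasurable b₁ μ) (hb₂ : AEStronglyMeasurable b₂ μ)
    (ha₁_le : ∀ᵐ x ∂μ, |a₁ x| ≤ 1) (ha₂_le : ∀ᵐ x ∂μ, |a₂ x| ≤ 1)
    (hb₁_le : ∀ᵐ x ∂μ, |b₁ x| ≤ 1) (hb₂_le : ∀ᵐ x ∂μ, |b₂ x| ≤ 1) :
    |(∫ x, a₁ x * b₁ x ∂μ) + (∫ x, a₁ x * b₂ x ∂μ) + (∫ x, a₂ x * b₁ x ∂μ)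
      - ∫ x, a₂ x * b₂ x ∂μ| ≤ 2 := by
  have h₁₁ := integrable_mul_of_abs_le_one_s5 ha₁ hb₁ ha₁_le hb₁_le
  have h₁₂ := integrable_mul_of_abs_le_one_s5 ha₁ hb₂ ha₁_le hb₂_le
  have h₂₁ := integrable_mul_of_abs_le_one_s5 ha₂ hb₁ ha₂_le hb₁_le
  have h₂₂ := integrable_mul_of_abs_le_one_s5 ha₂ hb₂ ha₂_le hb₂_le
  have hlin : ∫ x, (a₁ x * b₁ x + a₁ x * b₂ x + a₂ x * b₁ x - a₂ x * b₂ x) ∂μ =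
      (∫ x, a₁ x * b₁ x ∂μ) + (∫ x, a₁ x * b₂ x ∂μ) + (∫ x, a₂ x * b₁ x ∂μ)
        - ∫ x, a₂ x * b₂ x ∂μ := by
    rw [integral_sub (by fun_prop) h₂₂, integral_add (by fun_prop) h₂₁, integral_add h₁₁ h₁₂]
  have hbound : ∀ᵐ x ∂μ, ‖a₁ x * b₁ x + a₁ x * b₂ x + a₂ x * b₁ x - a₂ x * b₂ x‖ ≤ 2 := by
    filter_upwards [ha₁_le, ha₂_le, hb₁_le, hb₂_le] with x hx₁ hx₂ hy₁ hy₂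
    exact abs_chsh_le_two hx₁ hx₂ hy₁ hy₂
  simpa [← hlin] using norm_integral_le_of_norm_le_const hbound

end

/-- Correlations violating the CHSH inequality admit no common-cause
(local hidden-variables) explanation. -/
theorem no_common_cause_of_chsh_violation
    (E₁₁ E₁₂ E₂₁ E₂₂ : ℝ) (hviol : |E₁₁ + E₁₂ + E₂₁ - E₂₂| > 2) :
    ¬ ∃ (Λ : Type) (_ : MeasurableSpace Λ) (μ : Measure Λ)
        (_ : IsProbabilityMeasure μ) (a₁ a₂ b₁ b₂ : Λ → ℝ),
      Measurable a₁ ∧ Measurable a₂ ∧ Measurable b₁ ∧ Measurable b₂ ∧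
      (∀ x, |a₁ x| ≤ 1) ∧ (∀ x, |a₂ x| ≤ 1) ∧
      (∀ x, |b₁ x| ≤ 1) ∧ (∀ x, |b₂ x| ≤ 1) ∧
      (∫ x, a₁ x * b₁ x ∂μ) = E₁₁ ∧ (∫ x, a₁ x * b₂ x ∂μ) = E₁₂ ∧
      (∫ x, a₂ x * b₁ x ∂μ) = E₂₁ ∧ (∫ x, a₂ x * b₂ x ∂μ) = E₂₂ := by
  rintro ⟨Λ, _, μ, _, a₁, a₂, b₁, b₂, ma₁, ma₂, mb₁, mb₂, ha₁, ha₂, hb₁, hb₂,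
    rfl, rfl, rfl, rfl⟩
  have := abs_chsh_integral_le_two (μ := μ) ma₁.aestronglyMeasurable
    ma₂.aestronglyMeasurable mb₁.aestronglyMeasurable mb₂.aestronglyMeasurable
    (.of_forall ha₁) (.of_forall ha₂) (.of_forall hb₁) (.of_forall hb₂)
  linarith
end
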